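/- arXiv:cs/0202021 — 2 statements merged into one kernel-verified Lean document; each statement's English description precedes it below -/
import Mathlib

section
/- (Representation theorem for cumulative monotonic relations) Assume the compactness assumption on U. A consequence relation ⊦ is cumulative monotonic (i.e. cumulative and satisfies Monotonicity) if and only if there exists a simple cumulative model W (a cumulative model whose preference relation ≺ is empty) such that ⊦ equals ⊦_W. -/
namespace KLM

/-- Classical propositional formulas over a set `V` of propositional variables. -/
inductive Form (V : Type) : Type
  | var : V → Form V
  | fls : Form V
  | neg : Form V → Form V
  | conj : Form V → Form V → Form V
  | disj : Form V → Form V → Form V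
  | impl : Form V → Form V → Form V
  | biim : Form V → Form V → Form V

/-- A world is a truth assignment to the propositional variables. -/
abbrev World (V : Type) := V → Prop

/-- Satisfaction of a formula by a world (usual classical semantics). -/
def Sat {V : Type} (u : World V) : Form V → Prop
  | Form.var p => u p
  | Form.fls => False
  | Form.neg a => ¬ Sat u a
  | Form.conj a b => Sat u a ∧ Sat u b
  | Form.disj a b => Sat u a ∨ Sat u b
  | Form.impl a b => Sat u a → Sat u b
  | Form.biim a b => Sat u a ↔ Sat u b

variable {V : Type}

/-- `⊨ α` : every world of the universe `U` satisfies `α`. -/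
def Valid (U : Set (World V)) (a : Form V) : Prop := ∀ u ∈ U, Sat u a

/-- Reflexivity: α ⊦ α. -/
def Reflexivity (C : Form V → Form V → Prop) : Prop := ∀ a, C a a

/-- Left Logical Equivalence. -/
def LLE (U : Set (World V)) (C : Form V → Form V → Prop) : Prop :=
  ∀ a b c, Valid U (Form.biim a b) → C a c → C b c

/-- Right Weakening. -/
def RW (U : Set (World V)) (C : Form V → Form V → Prop) : Prop :=
  ∀ a b c, Valid U (Form.impl a b) → C c a → C c b

/-- Cut. -/
def CutRule (C : Form V → Form V → Prop) : Prop :=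
  ∀ a b c, C (Form.conj a b) c → C a b → C a c

/-- Cautious Monotonicity. -/
def CautMono (C : Form V → Form V → Prop) : Prop :=
  ∀ a b c, C a b → C a c → C (Form.conj a b) c

/-- A consequence relation is cumulative iff it satisfies Reflexivity, LLE, RW,
Cut and Cautious Monotonicity. -/
def Cumulative (U : Set (World V)) (C : Form V → Form V → Prop) : Prop :=
  Reflexivity C ∧ LLE U C ∧ RW U C ∧ CutRule C ∧ CautMono C

/-- And rule. -/
def AndRule (C : Form V → Form V → Prop) : Prop :=
  ∀ a b c, C a b → C a c → C a (Form.conj b c)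

/-- Or rule. -/
def OrRule (C : Form V → Form V → Prop) : Prop :=
  ∀ a b c, C a c → C b c → C (Form.disj a b) c

/-- A consequence relation is preferential iff it is cumulative and satisfies Or. -/
def Preferential (U : Set (World V)) (C : Form V → Form V → Prop) : Prop :=
  Cumulative U C ∧ OrRule C

/-- Monotonicity. -/
def Monot (U : Set (World V)) (C : Form V → Form V → Prop) : Prop :=
  ∀ a b c, Valid U (Form.impl a b) → C b c → C a c

/-- EHD : easy half of the deduction theorem. -/
def EHD (C : Form V → Form V → Prop) : Prop :=
  ∀ a b c, C a (Form.impl b c) → C (Form.conj a b) c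

/-- Transitivity. -/
def TransRule (C : Form V → Form V → Prop) : Prop :=
  ∀ a b c, C a b → C b c → C a c

/-- Contraposition. -/
def Contraposition (C : Form V → Form V → Prop) : Prop :=
  ∀ a b, C a b → C (Form.neg b) (Form.neg a)

/-- The rule S: from α ∧ β ⊦ γ infer α ⊦ β → γ. -/
def SRule (C : Form V → Form V → Prop) : Prop :=
  ∀ a b c, C (Form.conj a b) c → C a (Form.impl b c)

/-- MPC : modus ponens in the consequent. -/
def MPC (C : Form V → Form V → Prop) : Prop :=
  ∀ a b c, C a (Form.impl b c) → C a b → C a c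

/-- Equivalence rule. -/
def EquivRule (C : Form V → Form V → Prop) : Prop :=
  ∀ a b c, C a b → C b a → C a c → C b c

/-- Loop rule. -/
def LoopRule (C : Form V → Form V → Prop) : Prop :=
  ∀ k : ℕ, 1 ≤ k → ∀ al : ℕ → Form V,
    (∀ i < k, C (al i) (al (i + 1))) → C (al k) (al 0) → C (al 0) (al k)

/-- A world `m ∈ U` is normal for `α` iff it satisfies every plausible consequence of `α`. -/
def NormalFor (U : Set (World V)) (C : Form V → Form V → Prop)
    (a : Form V) (m : World V) : Prop :=
  m ∈ U ∧ ∀ b, C a b → Sat m b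

/-- Compactness assumption on the universe `U`: a set of formulas all of whose finite
subsets are satisfiable (in `U`) is satisfiable (in `U`). -/
def Compactness (U : Set (World V)) : Prop :=
  ∀ G : Set (Form V),
    (∀ F : Finset (Form V), ↑F ⊆ G → ∃ u ∈ U, ∀ a ∈ F, Sat u a) →
    ∃ u ∈ U, ∀ a ∈ G, Sat u a

/-- `t` is minimal in `A` (w.r.t. `prec`) iff `t ∈ A` and no element of `A` is below `t`. -/
def MinimalIn {S : Type} (prec : S → S → Prop) (A : Set S) (t : S) : Prop :=
  t ∈ A ∧ ∀ s ∈ A, ¬ prec s t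

/-- `A` is smooth iff every element of `A` is minimal in `A` or has a minimal
element of `A` below it. -/
def Smooth {S : Type} (prec : S → S → Prop) (A : Set S) : Prop :=
  ∀ t ∈ A, MinimalIn prec A t ∨ ∃ s, prec s t ∧ MinimalIn prec A s

/-- A cumulative model: states labeled by nonempty sets of worlds of `U`, with a
binary preference relation satisfying the smoothness condition. -/
structure CumulModel (V : Type) (U : Set (World V)) where
  S : Type
  l : S → Set (World V)
  l_sub : ∀ s, l s ⊆ U
  l_ne : ∀ s, (l s).Nonempty
  prec : S → S → Prop
  smooth : ∀ a : Form V, Smooth prec {s : S | ∀ u ∈ l s, Sat u a}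

/-- A state satisfies `α` iff every world in its label does. -/
def CumulModel.StateSat {V : Type} {U : Set (World V)} (W : CumulModel V U)
    (s : W.S) (a : Form V) : Prop :=
  ∀ u ∈ W.l s, Sat u a

/-- The consequence relation defined by a cumulative model: `α ⊦_W β` iff every state
minimal in `α̂` satisfies `β`. -/
def CumulModel.Cons {V : Type} {U : Set (World V)} (W : CumulModel V U)
    (a b : Form V) : Prop :=
  ∀ s : W.S, MinimalIn W.prec {t : W.S | W.StateSat t a} s → W.StateSat s b

/-- A preferential model: states labeled by single worlds of `U`, with a strict
partial order satisfying the smoothness condition. -/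
structure PrefModel (V : Type) (U : Set (World V)) where
  S : Type
  l : S → World V
  l_mem : ∀ s, l s ∈ U
  prec : S → S → Prop
  irrefl : ∀ s, ¬ prec s s
  trans : ∀ s t r, prec s t → prec t r → prec s r
  smooth : ∀ a : Form V, Smooth prec {s : S | Sat (l s) a}

/-- The consequence relation defined by a preferential model. -/
def PrefModel.Cons {V : Type} {U : Set (World V)} (W : PrefModel V U)
    (a b : Form V) : Prop :=
  ∀ s : W.S, MinimalIn W.prec {t : W.S | Sat (W.l t) a} s → Sat (W.l s) b

section AuxStmt18

variable {V : Type} {U : Set (World V)} {C : Form V → Form V → Prop}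

lemma and_of_cumulative (h : Cumulative U C) : AndRule C := by
  obtain ⟨hr, hlle, hrw, hcut, hcm⟩ := h
  intro a b c hab hac
  have h1 : C (Form.conj a b) c := hcm a b c hab hac
  have h2 : C (Form.conj (Form.conj a b) c) (Form.conj b c) := by
    apply hrw _ _ _ _ (hr _)
    intro u _ h
    exact ⟨h.1.2, h.2⟩
  have h3 : C (Form.conj a b) (Form.conj b c) := hcut _ _ _ h2 h1
  exact hcut _ _ _ h3 hab

lemma trans_of_cm (hc : Cumulative U C) (hm : Monot U C) : TransRule C := by
  intro a b c hab hbc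
  have h1 : C (Form.conj a b) c := hm _ _ _ (fun u _ h => h.2) hbc
  exact hc.2.2.2.1 _ _ _ h1 hab

lemma finset_conj (hc : Cumulative U C) (a : Form V) (F : Finset (Form V))
    (h : ∀ b ∈ F, C a b) :
    ∃ g, C a g ∧ ∀ u, Sat u g → ∀ b ∈ F, Sat u b := by
  classical
  induction F using Finset.induction_on with
  | empty =>
      refine ⟨Form.impl a a, ?_, by simp⟩
      exact hc.2.2.1 a (Form.impl a a) a (fun u _ _ h => h) (hc.1 a)
  | @insert x F hx ih =>
      obtain ⟨g, hg, hsat⟩ := ih (fun b hb => h b (Finset.mem_insert_of_mem hb))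
      refine ⟨Form.conj x g, and_of_cumulative hc _ _ _
        (h x (Finset.mem_insert_self x F)) hg, ?_⟩
      intro u hu b hb
      rcases Finset.mem_insert.mp hb with rfl | hb
      · exact hu.1
      · exact hsat u hu.2 b hb

/-- The key compactness lemma: if every world normal for `a` satisfies `c`,
then `C a c`. -/
lemma key_normal (hcomp : Compactness U) (hc : Cumulative U C) (a c : Form V)
    (h : ∀ m, NormalFor U C a m → Sat m c) : C a c := by
  classical
  set G : Set (Form V) := {b | C a b} ∪ {Form.neg c} with hGdef
  have hG : ¬ ∃ u ∈ U, ∀ b ∈ G, Sat u b := by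
    rintro ⟨u, hu, hall⟩
    have hn : NormalFor U C a u := ⟨hu, fun b hb => hall b (Or.inl hb)⟩
    exact (hall (Form.neg c) (Or.inr rfl)) (h u hn)
  have hF : ∃ F : Finset (Form V), ↑F ⊆ G ∧ ∀ u ∈ U, ¬ ∀ b ∈ F, Sat u b := by
    by_contra hcon
    push_neg at hcon
    exact hG (hcomp G (fun F hFG => hcon F hFG))
  obtain ⟨F, hFG, hFu⟩ := hF
  set F' : Finset (Form V) := F.erase (Form.neg c) with hF'def
  have hF'C : ∀ b ∈ F', C a b := by
    intro b hb
    obtain ⟨hne, hbF⟩ := Finset.mem_erase.mp hb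
    rcases hFG hbF with hb' | hb'
    · exact hb'
    · exact absurd hb' hne
  obtain ⟨g, hg, hgsat⟩ := finset_conj hc a F' hF'C
  have hvalid : Valid U (Form.impl g c) := by
    intro u hu
    intro hgu
    by_contra hcu
    apply hFu u hu
    intro b hb
    by_cases hb' : b = Form.neg c
    · subst hb'; exact hcu
    · exact hgsat u hgu b (Finset.mem_erase.mpr ⟨hb', hb⟩)
  exact hc.2.2.1 g c a hvalid hg

/-- The simple cumulative model built from normal worlds. -/
def normalModel (U : Set (World V)) (C : Form V → Form V → Prop) :
    CumulModel V U where
  S := {f : Form V // ∃ m, NormalFor U C f m}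
  l s := {m | NormalFor U C s.1 m}
  l_sub s m hm := hm.1
  l_ne s := s.2
  prec _ _ := False
  smooth _ t ht := Or.inl ⟨ht, fun _ _ h => h⟩

end AuxStmt18

/-- Representation theorem for cumulative monotonic relations: under
compactness, a consequence relation is cumulative monotonic iff it is defined by some
simple cumulative model (one whose preference relation is empty). -/
theorem stmt18 {V : Type} (U : Set (World V)) (C : Form V → Form V → Prop)
    (hcomp : Compactness U) :
    (Cumulative U C ∧ Monot U C) ↔
      ∃ W : CumulModel V U,
        (∀ s t, ¬ W.prec s t) ∧ (∀ a b : Form V, C a b ↔ W.Cons a b) := by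
  constructor
  · rintro ⟨hcum, hmono⟩
    refine ⟨normalModel U C, fun s t h => h, ?_⟩
    intro a b
    have htrans := trans_of_cm hcum hmono
    constructor
    · intro hab s hs
      intro m hm
      have hca : C s.1 a := key_normal hcomp hcum s.1 a (fun m' hm' => hs.1 m' hm')
      exact hm.2 b (htrans _ _ _ hca hab)
    · intro h
      apply key_normal hcomp hcum a b
      intro m hm
      have hs : (normalModel U C).StateSat ⟨a, m, hm⟩ a :=
        fun m' hm' => hm'.2 a (hcum.1 a)
      exact h ⟨a, m, hm⟩ ⟨hs, fun _ _ f => f⟩ m hm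
  · rintro ⟨W, hprec, hiff⟩
    have hCons : ∀ a b, C a b ↔ ∀ s, W.StateSat s a → W.StateSat s b := by
      intro a b
      rw [hiff a b]
      constructor
      · intro h s hs; exact h s ⟨hs, fun t _ hp => hprec t s hp⟩
      · intro h s hs; exact h s hs.1
    refine ⟨⟨?_, ?_, ?_, ?_, ?_⟩, ?_⟩
    · intro a
      rw [hCons]; exact fun s hs => hs
    · intro a b c hv h
      rw [hCons] at h ⊢
      intro s hs
      exact h s (fun u hu => (hv u (W.l_sub s hu)).mpr (hs u hu))
    · intro a b c hv h
      rw [hCons] at h ⊢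
      intro s hs u hu
      exact hv u (W.l_sub s hu) (h s hs u hu)
    · intro a b c h1 h2
      rw [hCons] at h1 h2 ⊢
      intro s hs
      exact h1 s (fun u hu => ⟨hs u hu, h2 s hs u hu⟩)
    · intro a b c h1 h2
      rw [hCons] at h1 h2 ⊢
      intro s hs
      exact h2 s (fun u hu => (hs u hu).1)
    · intro a b c hv h
      rw [hCons] at h ⊢
      intro s hs
      exact h s (fun u hu => hv u (W.l_sub s hu) (hs u hu))

end KLM
end

section
/- (Representation theorem for monotonic relations) Assume the compactness assumption on U. A consequence relation ⊦ is monotonic (i.e. cumulative and satisfies Contraposition) if and only if there exists a simple preferential model W (a preferential model whose preference relation ≺ is empty, i.e. a set V ⊆ U of worlds with α ⊦_W β iff every world of V satisfying α satisfies β) such that ⊦ equals ⊦_W. -/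
namespace KLM

variable {V : Type}

section Aux

variable {V : Type} {U : Set (World V)} {C : Form V → Form V → Prop}

lemma entail (hc : Cumulative U C) {a b : Form V}
    (h : ∀ u ∈ U, Sat u a → Sat u b) : C a b :=
  hc.2.2.1 a b a (fun u hu => h u hu) (hc.1 a)

lemma andR (hc : Cumulative U C) {a b c : Form V}
    (h1 : C a b) (h2 : C a c) : C a (Form.conj b c) := by
  have s2 : C (Form.conj a b) c := hc.2.2.2.2 a b c h1 h2
  have s3 : C (Form.conj (Form.conj a b) c) (Form.conj b c) :=
    entail hc (fun u hu hs => ⟨hs.1.2, hs.2⟩)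
  have s4 : C (Form.conj a b) (Form.conj b c) := hc.2.2.2.1 _ _ _ s3 s2
  exact hc.2.2.2.1 _ _ _ s4 h1

lemma monot (hc : Cumulative U C) (hcp : Contraposition C) {a b c : Form V}
    (h : ∀ u ∈ U, Sat u a → Sat u b) (hbc : C b c) : C a c := by
  have s1 : C (Form.neg c) (Form.neg b) := hcp _ _ hbc
  have s2 : C (Form.neg c) (Form.neg a) :=
    hc.2.2.1 (Form.neg b) (Form.neg a) (Form.neg c)
      (fun u hu (hnb : ¬ Sat u b) (ha : Sat u a) => hnb (h u hu ha)) s1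
  have s3 : C (Form.neg (Form.neg a)) (Form.neg (Form.neg c)) := hcp _ _ s2
  have s4 : C a (Form.neg (Form.neg c)) :=
    hc.2.1 (Form.neg (Form.neg a)) a (Form.neg (Form.neg c))
      (fun u _ => not_not (a := Sat u a)) s3
  exact hc.2.2.1 (Form.neg (Form.neg c)) c a
    (fun u _ (hnn : ¬ ¬ Sat u c) => not_not.mp hnn) s4

lemma orR (hc : Cumulative U C) (hcp : Contraposition C) {a b c : Form V}
    (h1 : C a c) (h2 : C b c) : C (Form.disj a b) c := by
  have s1 : C (Form.neg c) (Form.conj (Form.neg a) (Form.neg b)) :=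
    andR hc (hcp _ _ h1) (hcp _ _ h2)
  have s2 : C (Form.neg c) (Form.neg (Form.disj a b)) :=
    hc.2.2.1 (Form.conj (Form.neg a) (Form.neg b)) (Form.neg (Form.disj a b)) (Form.neg c)
      (fun u _ (hs : ¬ Sat u a ∧ ¬ Sat u b) (hd : Sat u a ∨ Sat u b) => hd.elim hs.1 hs.2) s1
  have s3 : C (Form.neg (Form.neg (Form.disj a b))) (Form.neg (Form.neg c)) := hcp _ _ s2
  have s4 : C (Form.disj a b) (Form.neg (Form.neg c)) :=
    hc.2.1 (Form.neg (Form.neg (Form.disj a b))) (Form.disj a b) (Form.neg (Form.neg c))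
      (fun u _ => not_not (a := Sat u (Form.disj a b))) s3
  exact hc.2.2.1 (Form.neg (Form.neg c)) c (Form.disj a b)
    (fun u _ (hnn : ¬ ¬ Sat u c) => not_not.mp hnn) s4

lemma implFromC (hc : Cumulative U C) (hcp : Contraposition C) {x y : Form V}
    (h : C x y) (a : Form V) : C a (Form.impl x y) := by
  have h1 : C (Form.conj a x) y :=
    monot hc hcp (fun u _ (hs : Sat u a ∧ Sat u x) => hs.2) h
  have hd2 : C (Form.conj a (Form.neg (Form.impl x y))) y :=
    monot hc hcp (b := Form.conj a x)
      (fun u _ (hs : Sat u a ∧ ¬ (Sat u x → Sat u y)) =>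
        (⟨hs.1, by by_contra hx; exact hs.2 (fun h' => absurd h' hx)⟩ : Sat u a ∧ Sat u x)) h1
  have hd3 : C (Form.conj a (Form.neg (Form.impl x y))) (Form.neg y) :=
    entail hc (fun u _ (hs : Sat u a ∧ ¬ (Sat u x → Sat u y)) (hy : Sat u y) =>
      hs.2 (fun _ => hy))
  have hd5 : C (Form.conj a (Form.neg (Form.impl x y))) (Form.impl x y) :=
    hc.2.2.1 (Form.conj y (Form.neg y)) (Form.impl x y) _
      (fun u _ (hs : Sat u y ∧ ¬ Sat u y) _ => absurd hs.1 hs.2)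
      (andR hc hd2 hd3)
  have he : C (Form.conj a (Form.impl x y)) (Form.impl x y) :=
    entail hc (fun u _ (hs : Sat u a ∧ (Sat u x → Sat u y)) => hs.2)
  have ho : C (Form.disj (Form.conj a (Form.impl x y))
      (Form.conj a (Form.neg (Form.impl x y)))) (Form.impl x y) :=
    orR hc hcp he hd5
  refine hc.2.1 _ a _ (fun u _ => ?_) ho
  show (Sat u a ∧ (Sat u x → Sat u y)) ∨ (Sat u a ∧ ¬ (Sat u x → Sat u y)) ↔ Sat u a
  by_cases hi : Sat u x → Sat u y <;> tauto

lemma mpc (hc : Cumulative U C) {a b c : Form V}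
    (h1 : C a (Form.impl b c)) (h2 : C a b) : C a c :=
  hc.2.2.1 (Form.conj (Form.impl b c) b) c a
    (fun u _ (hs : (Sat u b → Sat u c) ∧ Sat u b) => hs.1 hs.2)
    (andR hc h1 h2)

lemma fromFinset (hc : Cumulative U C) (hcp : Contraposition C) (a : Form V)
    (F : Finset (Form V)) (hF : ∀ φ ∈ F, ∃ x y, C x y ∧ φ = Form.impl x y) :
    ∀ b, (∀ u ∈ U, Sat u a → (∀ φ ∈ F, Sat u φ) → Sat u b) → C a b := by
  classical
  induction F using Finset.induction_on with
  | empty =>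
    intro b hb
    exact entail hc (fun u hu ha => hb u hu ha (by simp))
  | @insert φ F hφF ih =>
    intro b hb
    obtain ⟨x, y, hxy, rfl⟩ := hF _ (Finset.mem_insert_self _ _)
    have h1 : C a (Form.impl x y) := implFromC hc hcp hxy a
    have h2 : C a (Form.impl (Form.impl x y) b) := by
      refine ih (fun ψ hψ => hF ψ (Finset.mem_insert_of_mem hψ)) _ ?_
      intro u hu ha hFs
      intro hsφ
      refine hb u hu ha ?_
      intro ψ hψ
      rcases Finset.mem_insert.1 hψ with rfl | hmem
      · exact hsφ
      · exact hFs ψ hmem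
    exact mpc hc h2 h1

end Aux

/-- Representation theorem for monotonic relations: under compactness,
a consequence relation is monotonic (cumulative + Contraposition) iff it is defined by
some simple preferential model, i.e. a set `Vs ⊆ U` of worlds with
α ⊦ β iff every world of `Vs` satisfying α satisfies β. -/
theorem stmt19 {V : Type} (U : Set (World V)) (C : Form V → Form V → Prop)
    (hcomp : Compactness U) :
    (Cumulative U C ∧ Contraposition C) ↔
      ∃ Vs : Set (World V), Vs ⊆ U ∧
        ∀ a b : Form V, C a b ↔ ∀ u ∈ Vs, Sat u a → Sat u b := by
  constructor
  · rintro ⟨hc, hcp⟩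
    refine ⟨{u | u ∈ U ∧ ∀ x y, C x y → Sat u x → Sat u y}, fun u hu => hu.1, ?_⟩
    intro a b
    constructor
    · intro h u hu ha
      exact hu.2 a b h ha
    · intro h
      classical
      set G : Set (Form V) :=
        insert a (insert (Form.neg b) {φ | ∃ x y, C x y ∧ φ = Form.impl x y}) with hG
      by_cases hsat : ∀ F : Finset (Form V), ↑F ⊆ G → ∃ u ∈ U, ∀ φ ∈ F, Sat u φ
      · obtain ⟨u, hu, hall⟩ := hcomp G hsat
        have hua : Sat u a := hall a (by simp [hG])
        have hub : ¬ Sat u b := hall (Form.neg b) (by simp [hG])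
        have huV : u ∈ {u | u ∈ U ∧ ∀ x y, C x y → Sat u x → Sat u y} :=
          ⟨hu, fun x y hxy => hall (Form.impl x y)
            (Set.mem_insert_iff.2 (Or.inr (Set.mem_insert_iff.2 (Or.inr ⟨x, y, hxy, rfl⟩))))⟩
        exact absurd (h u huV hua) hub
      · push_neg at hsat
        obtain ⟨F, hFG, hFun⟩ := hsat
        set F' := F.filter (fun φ => φ ≠ a ∧ φ ≠ Form.neg b) with hF'
        refine fromFinset hc hcp a F' ?_ b ?_
        · intro φ hφ
          have hm := Finset.mem_filter.1 hφ
          have hmG := hFG hm.1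
          rcases hmG with h1 | h1
          · exact absurd h1 hm.2.1
          · rcases h1 with h2 | h2
            · exact absurd h2 hm.2.2
            · obtain ⟨x, y, hxy, he⟩ := h2
              exact ⟨x, y, hxy, he⟩
        · intro u hu ha hsF'
          by_contra hb
          obtain ⟨φ, hφF, hφn⟩ := hFun u hu
          by_cases h1 : φ = a
          · exact hφn (h1 ▸ ha)
          · by_cases h2 : φ = Form.neg b
            · subst h2; exact hφn hb
            · exact hφn (hsF' φ (Finset.mem_filter.2 ⟨hφF, h1, h2⟩))
  · rintro ⟨Vs, hVU, hiff⟩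
    refine ⟨⟨?_, ?_, ?_, ?_, ?_⟩, ?_⟩
    · intro a
      exact (hiff a a).mpr (fun u _ ha => ha)
    · intro a b c hval hac
      refine (hiff b c).mpr (fun u hu hb => ?_)
      exact (hiff a c).mp hac u hu ((hval u (hVU hu)).2 hb)
    · intro a b c hval hca
      refine (hiff c b).mpr (fun u hu hcu => ?_)
      exact hval u (hVU hu) ((hiff c a).mp hca u hu hcu)
    · intro a b c h1 h2
      refine (hiff a c).mpr (fun u hu ha => ?_)
      exact (hiff _ c).mp h1 u hu ⟨ha, (hiff a b).mp h2 u hu ha⟩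
    · intro a b c h1 h2
      refine (hiff _ c).mpr (fun u hu hab => ?_)
      exact (hiff a c).mp h2 u hu hab.1
    · intro a b h
      refine (hiff _ _).mpr (fun u hu hnb ha => ?_)
      exact hnb ((hiff a b).mp h u hu ha)


end KLM
end
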